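/- arXiv:1810.01237 — 4 statements merged into one kernel-verified Lean document; each statement's English description precedes it below -/
import Mathlib

section
/- Consider the instance $I_n$ with $n$ even: agents $b_1,\ldots,b_n$, goods $g_1,\ldots,g_n$, agent $b_i$ owning one unit of $g_i$, utilities $u_{i,i-1} = U$ for $2 \leq i \leq n$, $u_{i,i+1} = 1$ for $2 \leq i \leq n-1$, $u_{1,1} = u_{1,2} = U$, all other utilities zero. Then $I_n$ is irreducible: for every nonempty proper subset $P$ of agents, there exist $b_i \in P$ and $b_j \notin P$ with $u_{i,j} > 0$. -/
theorem stmt_11 (n U : ℕ) (hn : 4 ≤ n) (heven : Even n) (hU : 2 ≤ U)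
    (u : ℕ → ℕ → ℕ)
    (h1 : ∀ i, 2 ≤ i → i ≤ n → u i (i - 1) = U)
    (h2 : ∀ i, 2 ≤ i → i ≤ n - 1 → u i (i + 1) = 1)
    (h3 : u 1 1 = U) (h4 : u 1 2 = U)
    (h0 : ∀ i j, 1 ≤ i → i ≤ n → 1 ≤ j → j ≤ n →
      ¬(2 ≤ i ∧ j = i - 1) → ¬(2 ≤ i ∧ i ≤ n - 1 ∧ j = i + 1) →
      ¬(i = 1 ∧ (j = 1 ∨ j = 2)) → u i j = 0)
    (P : Finset ℕ) (hP : P ⊆ Finset.Icc 1 n) (hne : P.Nonempty)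
    (hprop : P ≠ Finset.Icc 1 n) :
    ∃ i ∈ P, ∃ j ∈ Finset.Icc 1 n, j ∉ P ∧ 0 < u i j := by
  by_cases hA : ∃ i ∈ P, 2 ≤ i ∧ i - 1 ∉ P
  · obtain ⟨i, hiP, hi2, hi1⟩ := hA
    have hiIcc := hP hiP
    simp only [Finset.mem_Icc] at hiIcc
    refine ⟨i, hiP, i - 1, ?_, hi1, ?_⟩
    · simp only [Finset.mem_Icc]; omega
    · rw [h1 i hi2 hiIcc.2]; omega
  · push_neg at hA
    -- P is downward closed, so 1 ∈ P
    have h1P : (1 : ℕ) ∈ P := by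
      have hm := P.min'_mem hne
      by_contra h1p
      have hge : 2 ≤ P.min' hne := by
        have h' := hP hm
        simp only [Finset.mem_Icc] at h'
        rcases Nat.lt_or_ge (P.min' hne) 2 with h | h
        · exfalso
          have : P.min' hne = 1 := by omega
          exact h1p (this ▸ hm)
        · exact h
      have hmem := hA _ hm hge
      have := P.min'_le _ hmem
      omega
    -- complement nonempty
    have hSne : (Finset.Icc 1 n \ P).Nonempty := by
      rw [Finset.sdiff_nonempty]
      intro hsub
      exact hprop (Finset.Subset.antisymm hP hsub)
    set k := (Finset.Icc 1 n \ P).min' hSne with hk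
    have hkmem := (Finset.Icc 1 n \ P).min'_mem hSne
    rw [← hk] at hkmem
    simp only [Finset.mem_sdiff, Finset.mem_Icc] at hkmem
    obtain ⟨⟨hk1, hkn⟩, hkP⟩ := hkmem
    have hk2 : 2 ≤ k := by
      rcases Nat.lt_or_ge k 2 with h | h
      · exfalso; have : k = 1 := by omega
        exact hkP (this ▸ h1P)
      · exact h
    have hk1P : k - 1 ∈ P := by
      by_contra h
      have : k - 1 ∈ Finset.Icc 1 n \ P := by
        simp only [Finset.mem_sdiff, Finset.mem_Icc]
        exact ⟨⟨by omega, by omega⟩, h⟩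
      have := (Finset.Icc 1 n \ P).min'_le _ this
      rw [← hk] at this; omega
    rcases Nat.lt_or_ge k 3 with h | h
    · -- k = 2
      have hk2' : k = 2 := by omega
      refine ⟨1, h1P, 2, ?_, hk2' ▸ hkP, ?_⟩
      · simp only [Finset.mem_Icc]; omega
      · rw [h4]; omega
    · refine ⟨k - 1, hk1P, k, ?_, hkP, ?_⟩
      · simp only [Finset.mem_Icc]; omega
      · have := h2 (k - 1) (by omega) (by omega)
        have hkk : k - 1 + 1 = k := by omega
        rw [hkk] at this
        omega
end

section
/- For the instance $I_n$ (as above, with $U \geq 2$ and $n$ even), any equilibrium price vector $p$ satisfies $p_{i-1} \geq U \cdot p_{i+1}$ for every even $i$ with $2 \leq i \leq n-2$. Consequently the ratio of the maximum to the minimum equilibrium price is at least $U^{n/2 - 1}$. -/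
theorem stmt_12 (n U : ℕ) (hn : 4 ≤ n) (heven : Even n) (hU : 2 ≤ U)
    (u : ℕ → ℕ → ℕ)
    (h1 : ∀ i, 2 ≤ i → i ≤ n → u i (i - 1) = U)
    (h2 : ∀ i, 2 ≤ i → i ≤ n - 1 → u i (i + 1) = 1)
    (h3 : u 1 1 = U) (h4 : u 1 2 = U)
    (h0 : ∀ i j, 1 ≤ i → i ≤ n → 1 ≤ j → j ≤ n →
      ¬(2 ≤ i ∧ j = i - 1) → ¬(2 ≤ i ∧ i ≤ n - 1 ∧ j = i + 1) →
      ¬(i = 1 ∧ (j = 1 ∨ j = 2)) → u i j = 0)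
    (p : ℕ → ℝ) (f : ℕ → ℕ → ℝ)
    (hppos : ∀ j, 1 ≤ j → j ≤ n → 0 < p j)
    (hfnn : ∀ i j, 0 ≤ f i j)
    (hsold : ∀ j, 1 ≤ j → j ≤ n → ∑ i ∈ Finset.Icc 1 n, f i j = p j)
    (hspend : ∀ i, 1 ≤ i → i ≤ n → ∑ j ∈ Finset.Icc 1 n, f i j = p i)
    (hbfb : ∀ i j, 1 ≤ i → i ≤ n → 1 ≤ j → j ≤ n → 0 < f i j →
      ∀ ℓ, 1 ≤ ℓ → ℓ ≤ n → (u i ℓ : ℝ) / p ℓ ≤ (u i j : ℝ) / p j) :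
    (∀ i, Even i → 2 ≤ i → i ≤ n - 2 → (U : ℝ) * p (i + 1) ≤ p (i - 1)) ∧
    ∃ j ∈ Finset.Icc 1 n, ∃ k ∈ Finset.Icc 1 n,
      (U : ℝ) ^ (n / 2 - 1) * p k ≤ p j := by
  have hn2 : n % 2 = 0 := Nat.even_iff.mp heven
  have hUpos : (0:ℝ) < (U:ℝ) := by
    have : (0:ℕ) < U := by omega
    exact_mod_cast this
  -- zero utility implies zero flow
  have zf : ∀ m j, 1 ≤ m → m ≤ n → 1 ≤ j → j ≤ n → u m j = 0 → f m j = 0 := by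
    intro m j hm1 hmn hj1 hjn hu
    by_contra hne
    have hpos : 0 < f m j := lt_of_le_of_ne (hfnn m j) (Ne.symm hne)
    rcases Nat.lt_or_ge m 2 with hm | hm
    · have hm1' : m = 1 := by omega
      subst hm1'
      have hb := hbfb 1 j (by omega) (by omega) hj1 hjn hpos 1 (by omega) (by omega)
      rw [h3, hu] at hb
      have hq : (0:ℝ) < (U:ℝ) / p 1 := div_pos hUpos (hppos 1 (by omega) (by omega))
      simp at hb
      linarith
    · have hb := hbfb m j hm1 hmn hj1 hjn hpos (m-1) (by omega) (by omega)
      rw [h1 m hm hmn, hu] at hb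
      have hq : (0:ℝ) < (U:ℝ) / p (m-1) :=
        div_pos hUpos (hppos (m-1) (by omega) (by omega))
      simp at hb
      linarith
  -- budget of agent m, 2 ≤ m ≤ n-1
  have budget : ∀ m, 2 ≤ m → m ≤ n - 1 → f m (m-1) + f m (m+1) = p m := by
    intro m hm2 hmn
    have hmn' : m ≤ n := by omega
    have hsub : ({m-1, m+1} : Finset ℕ) ⊆ Finset.Icc 1 n := by
      intro x hx
      simp only [Finset.mem_insert, Finset.mem_singleton] at hx
      simp only [Finset.mem_Icc]
      omega
    have hz : ∀ j ∈ Finset.Icc 1 n, j ∉ ({m-1,m+1} : Finset ℕ) → f m j = 0 := by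
      intro j hj hjnot
      simp only [Finset.mem_Icc] at hj
      simp only [Finset.mem_insert, Finset.mem_singleton, not_or] at hjnot
      exact zf m j (by omega) hmn' hj.1 hj.2
        (h0 m j (by omega) hmn' hj.1 hj.2 (by omega) (by omega) (by omega))
    have hsum := Finset.sum_subset hsub hz
    rw [Finset.sum_pair (show m-1 ≠ m+1 by omega)] at hsum
    rw [hsum, hspend m (by omega) hmn']
  -- budget of agent n
  have budgetn : f n (n-1) = p n := by
    have hsub : ({n-1} : Finset ℕ) ⊆ Finset.Icc 1 n := by
      intro x hx
      simp only [Finset.mem_singleton] at hx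
      simp only [Finset.mem_Icc]
      omega
    have hz : ∀ j ∈ Finset.Icc 1 n, j ∉ ({n-1} : Finset ℕ) → f n j = 0 := by
      intro j hj hjnot
      simp only [Finset.mem_Icc] at hj
      simp only [Finset.mem_singleton] at hjnot
      exact zf n j (by omega) (by omega) hj.1 hj.2
        (h0 n j (by omega) (by omega) hj.1 hj.2 (by omega) (by omega) (by omega))
    have hsum := Finset.sum_subset hsub hz
    rw [Finset.sum_singleton] at hsum
    rw [hsum, hspend n (by omega) (by omega)]
  -- market clearing for good j, 3 ≤ j ≤ n-1
  have clear : ∀ j, 3 ≤ j → j ≤ n - 1 → f (j-1) j + f (j+1) j = p j := by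
    intro j hj3 hjn
    have hsub : ({j-1, j+1} : Finset ℕ) ⊆ Finset.Icc 1 n := by
      intro x hx
      simp only [Finset.mem_insert, Finset.mem_singleton] at hx
      simp only [Finset.mem_Icc]
      omega
    have hz : ∀ m ∈ Finset.Icc 1 n, m ∉ ({j-1,j+1} : Finset ℕ) → f m j = 0 := by
      intro m hm hmnot
      simp only [Finset.mem_Icc] at hm
      simp only [Finset.mem_insert, Finset.mem_singleton, not_or] at hmnot
      exact zf m j hm.1 hm.2 (by omega) (by omega)
        (h0 m j hm.1 hm.2 (by omega) (by omega) (by omega) (by omega) (by omega))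
    have hsum := Finset.sum_subset hsub hz
    rw [Finset.sum_pair (show j-1 ≠ j+1 by omega)] at hsum
    rw [hsum, hsold j (by omega) (by omega)]
  -- market clearing for good n
  have clearn : f (n-1) n = p n := by
    have hsub : ({n-1} : Finset ℕ) ⊆ Finset.Icc 1 n := by
      intro x hx
      simp only [Finset.mem_singleton] at hx
      simp only [Finset.mem_Icc]
      omega
    have hz : ∀ m ∈ Finset.Icc 1 n, m ∉ ({n-1} : Finset ℕ) → f m n = 0 := by
      intro m hm hmnot
      simp only [Finset.mem_Icc] at hm
      simp only [Finset.mem_singleton] at hmnot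
      exact zf m n hm.1 hm.2 (by omega) (by omega)
        (h0 m n hm.1 hm.2 (by omega) (by omega) (by omega) (by omega) (by omega))
    have hsum := Finset.sum_subset hsub hz
    rw [Finset.sum_singleton] at hsum
    rw [hsum, hsold n (by omega) (by omega)]
  -- flow symmetry along the path
  have sym : ∀ d j, 2 ≤ j → j + d = n - 1 → f j (j+1) = f (j+1) j := by
    intro d
    induction d with
    | zero =>
      intro j hj2 hj
      have hj' : j = n - 1 := by omega
      subst hj'
      have hone : n - 1 + 1 = n := by omega
      rw [hone, clearn, budgetn]
    | succ d ih =>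
      intro j hj2 hj
      have hA := clear (j+1) (by omega) (by omega)
      have hB := budget (j+1) (by omega) (by omega)
      have hC := ih (j+1) (by omega) (by omega)
      have e1 : j + 1 - 1 = j := by omega
      have e2 : j + 1 + 1 = j + 2 := by omega
      rw [e1, e2] at hA hB
      linarith
  -- single flow bounded by price (as part of sold sum)
  have fle : ∀ m j, 1 ≤ m → m ≤ n → 1 ≤ j → j ≤ n → f m j ≤ p j := by
    intro m j hm1 hmn hj1 hjn
    rw [← hsold j hj1 hjn]
    exact Finset.single_le_sum (fun i _ => hfnn i j)
      (by simp only [Finset.mem_Icc]; omega)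
  have fle' : ∀ m j, 1 ≤ m → m ≤ n → 1 ≤ j → j ≤ n → f m j ≤ p m := by
    intro m j hm1 hmn hj1 hjn
    rw [← hspend m hm1 hmn]
    exact Finset.single_le_sum (fun i _ => hfnn m i)
      (by simp only [Finset.mem_Icc]; omega)
  -- Part 1
  have part1 : ∀ i, Even i → 2 ≤ i → i ≤ n - 2 → (U : ℝ) * p (i + 1) ≤ p (i - 1) := by
    intro i hie hi2 hin
    have hi1n : i + 1 ≤ n - 1 := by omega
    have hpm1 : 0 < p (i-1) := hppos (i-1) (by omega) (by omega)
    have hpp1 : 0 < p (i+1) := hppos (i+1) (by omega) (by omega)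
    rcases (hfnn i (i+1)).lt_or_eq with hpos | hzero
    · -- agent i buys good i+1
      have hb := hbfb i (i+1) (by omega) (by omega) (by omega) (by omega) hpos
        (i-1) (by omega) (by omega)
      rw [h1 i hi2 (by omega), h2 i hi2 (by omega)] at hb
      rw [div_le_div_iff₀ hpm1 hpp1] at hb
      push_cast at hb
      linarith
    · -- f i (i+1) = 0
      have hzero' : f i (i+1) = 0 := hzero.symm
      -- agent i spends all on good i-1
      have hbudi := budget i hi2 (by omega)
      have hpi : f i (i-1) = p i := by rw [hzero'] at hbudi; linarith
      have hple : p i ≤ p (i-1) := by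
        have := fle i (i-1) (by omega) (by omega) (by omega) (by omega)
        linarith [hpi ▸ this]
      -- clearing of good i+1: f (i+2) (i+1) = p (i+1)
      have hclr := clear (i+1) (by omega) (by omega)
      have e1 : i + 1 - 1 = i := by omega
      have e2 : i + 1 + 1 = i + 2 := by omega
      rw [e1, e2, hzero'] at hclr
      have hf21 : f (i+2) (i+1) = p (i+1) := by linarith
      have hp12 : p (i+1) ≤ p (i+2) := by
        have := fle' (i+2) (i+1) (by omega) (by omega) (by omega) (by omega)
        linarith
      -- agent i+1 spends everything on good i+2
      have hsymi : f i (i+1) = f (i+1) i := sym (n - 1 - i) i hi2 (by omega)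
      have hbud1 := budget (i+1) (by omega) (by omega)
      rw [e1, e2] at hbud1
      have hf12 : f (i+1) (i+2) = p (i+1) := by
        rw [← hsymi, hzero'] at hbud1
        linarith [hppos (i+1) (by omega) (by omega)]
      have hfpos : 0 < f (i+1) (i+2) := by rw [hf12]; exact hpp1
      have hb := hbfb (i+1) (i+2) (by omega) (by omega) (by omega) (by omega) hfpos
        i (by omega) (by omega)
      have hu1 : u (i+1) i = U := by
        have := h1 (i+1) (by omega) (by omega)
        rw [e1] at this; exact this
      have hu2 : u (i+1) (i+2) = 1 := by
        have := h2 (i+1) (by omega) (by omega)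
        rw [e2] at this; exact this
      rw [hu1, hu2] at hb
      have hpi0 : 0 < p i := hppos i (by omega) (by omega)
      have hpp2 : 0 < p (i+2) := hppos (i+2) (by omega) (by omega)
      rw [div_le_div_iff₀ hpi0 hpp2] at hb
      push_cast at hb
      nlinarith
  refine ⟨part1, ?_⟩
  -- chain the inequalities
  have chain : ∀ k, k ≤ n / 2 - 1 → (U:ℝ)^k * p (2*k+1) ≤ p 1 := by
    intro k
    induction k with
    | zero => intro _; simp
    | succ k ih =>
      intro hk
      have hk' : k ≤ n / 2 - 1 := by omega
      have hkey := part1 (2*k+2) (by exact ⟨k+1, by ring⟩) (by omega) (by omega)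
      have e1 : 2*k+2+1 = 2*(k+1)+1 := by ring
      have e2 : 2*k+2-1 = 2*k+1 := by omega
      rw [e1, e2] at hkey
      have hUk : (0:ℝ) ≤ (U:ℝ)^k := by positivity
      calc (U:ℝ)^(k+1) * p (2*(k+1)+1) = (U:ℝ)^k * ((U:ℝ) * p (2*(k+1)+1)) := by ring
      _ ≤ (U:ℝ)^k * p (2*k+1) := by
          exact mul_le_mul_of_nonneg_left hkey hUk
      _ ≤ p 1 := ih hk'
  have hfin := chain (n/2 - 1) le_rfl
  have e3 : 2*(n/2-1)+1 = n - 1 := by omega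
  rw [e3] at hfin
  exact ⟨1, by simp only [Finset.mem_Icc]; omega, n-1,
    by simp only [Finset.mem_Icc]; omega, hfin⟩
end

section
/- Let $f$ be a balanced flow in an equality network. If $f_{ij} > 0$ and $f_{i'j} > 0$ for two agents $b_i, b_{i'}$ and one good $g_j$, then $r_f(b_i) = r_f(b_{i'})$. Moreover if $(b_i,g_j)$ and $(b_{i'},g_j)$ are both edges and $r_f(b_i) > r_f(b_{i'})$, then $f_{i'j} = 0$. -/
lemma key_14 (n m : ℕ)
    (c : Fin n → ℝ) (d : Fin m → ℝ) (E : Fin n → Fin m → Prop)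
    (f : Fin n → Fin m → ℝ)
    (hfnn : ∀ i j, 0 ≤ f i j)
    (hsupp : ∀ i j, 0 < f i j → E i j)
    (hagent : ∀ i, ∑ j, f i j ≤ c i)
    (hgood : ∀ j, ∑ i, f i j ≤ d j)
    (hbal : ∀ g : Fin n → Fin m → ℝ,
      (∀ i j, 0 ≤ g i j) → (∀ i j, 0 < g i j → E i j) →
      (∀ i, ∑ j, g i j ≤ c i) → (∀ j, ∑ i, g i j ≤ d j) →
      (∑ i, ∑ j, g i j = ∑ i, ∑ j, f i j) →
      ∑ i, (c i - ∑ j, f i j) ^ 2 ≤ ∑ i, (c i - ∑ j, g i j) ^ 2)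
    (i i' : Fin n) (j : Fin m) (hEi : E i j) (hEi' : E i' j)
    (hlt : c i' - ∑ j', f i' j' < c i - ∑ j', f i j') : f i' j = 0 := by
  by_contra hne
  have hpos : 0 < f i' j := lt_of_le_of_ne (hfnn i' j) (Ne.symm hne)
  set ri : ℝ := c i - ∑ j', f i j' with hri
  set ri' : ℝ := c i' - ∑ j', f i' j' with hri'
  have hii' : i ≠ i' := by rintro rfl; exact lt_irrefl _ hlt
  have hri'0 : 0 ≤ ri' := by have := hagent i'; simp [hri']; linarith
  set ε : ℝ := min (f i' j) ((ri - ri') / 2) with hε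
  have hε0 : 0 < ε := lt_min hpos (by linarith)
  have hε1 : ε ≤ f i' j := min_le_left _ _
  have hε2 : ε ≤ (ri - ri') / 2 := min_le_right _ _
  set g : Fin n → Fin m → ℝ := fun k l =>
    if k = i ∧ l = j then f k l + ε else if k = i' ∧ l = j then f k l - ε else f k l with hg
  have haux : ∀ k l, g k l = f k l + (if k = i ∧ l = j then ε else 0)
      - (if k = i' ∧ l = j then ε else 0) := by
    intro k l
    simp only [hg]
    split_ifs with h1 h2 <;> try ring
    · exact absurd (h1.1.symm.trans h2.1) hii'
  have hrow : ∀ k, ∑ l, g k l = (∑ l, f k l) + (if k = i then ε else 0)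
      - (if k = i' then ε else 0) := by
    intro k
    simp only [haux, Finset.sum_sub_distrib, Finset.sum_add_distrib, ite_and]
    congr 1 <;> [skip; split_ifs <;> simp]
    congr 1; split_ifs <;> simp
  have hcol : ∀ l, ∑ k, g k l = ∑ k, f k l := by
    intro l
    simp only [haux, Finset.sum_sub_distrib, Finset.sum_add_distrib]
    rcases eq_or_ne l j with rfl | hl
    · simp [hii']
    · simp [hl]
  have hgnn : ∀ k l, 0 ≤ g k l := by
    intro k l
    simp only [hg]
    split_ifs with h1 h2
    · have := hfnn k l; linarith
    · obtain ⟨rfl, rfl⟩ := h2; linarith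
    · exact hfnn k l
  have hgsupp : ∀ k l, 0 < g k l → E k l := by
    intro k l hgl
    simp only [hg] at hgl
    split_ifs at hgl with h1 h2
    · obtain ⟨rfl, rfl⟩ := h1; exact hEi
    · obtain ⟨rfl, rfl⟩ := h2; exact hEi'
    · exact hsupp k l hgl
  have hgagent : ∀ k, ∑ l, g k l ≤ c k := by
    intro k
    rw [hrow k]
    rcases eq_or_ne k i with rfl | h1
    · simp [hii']; linarith
    · rcases eq_or_ne k i' with rfl | h2
      · simp [h1]; have := hagent k; linarith
      · simp [h1, h2]; exact hagent k
  have hggood : ∀ l, ∑ k, g k l ≤ d l := fun l => (hcol l) ▸ hgood l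
  have htot : ∑ k, ∑ l, g k l = ∑ k, ∑ l, f k l := by
    rw [Finset.sum_comm]
    rw [Finset.sum_comm (f := fun k l => f k l)]
    exact Finset.sum_congr rfl fun l _ => hcol l
  have hpt : ∀ k, (c k - ∑ l, g k l) ^ 2 = (c k - ∑ l, f k l) ^ 2
      + (if k = i then ε ^ 2 - 2 * ε * ri else 0)
      + (if k = i' then ε ^ 2 + 2 * ε * ri' else 0) := by
    intro k
    rw [hrow k]
    rcases eq_or_ne k i with rfl | h1
    · simp [hii', hri]; ring
    · rcases eq_or_ne k i' with rfl | h2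
      · simp [h1, hri']; ring
      · simp [h1, h2]
  have hsum : ∑ k, (c k - ∑ l, g k l) ^ 2
      = (∑ k, (c k - ∑ l, f k l) ^ 2) + (ε ^ 2 - 2 * ε * ri) + (ε ^ 2 + 2 * ε * ri') := by
    simp only [hpt, Finset.sum_add_distrib, Finset.sum_ite_eq']
    simp
  have hb := hbal g hgnn hgsupp hgagent hggood htot
  rw [hsum] at hb
  nlinarith [hb, hε0, hε2]

theorem stmt_14 (n m : ℕ)
    (c : Fin n → ℝ) (d : Fin m → ℝ) (E : Fin n → Fin m → Prop)
    (f : Fin n → Fin m → ℝ)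
    (hfnn : ∀ i j, 0 ≤ f i j)
    (hsupp : ∀ i j, 0 < f i j → E i j)
    (hagent : ∀ i, ∑ j, f i j ≤ c i)
    (hgood : ∀ j, ∑ i, f i j ≤ d j)
    (hmax : ∀ g : Fin n → Fin m → ℝ,
      (∀ i j, 0 ≤ g i j) → (∀ i j, 0 < g i j → E i j) →
      (∀ i, ∑ j, g i j ≤ c i) → (∀ j, ∑ i, g i j ≤ d j) →
      ∑ i, ∑ j, g i j ≤ ∑ i, ∑ j, f i j)
    (hbal : ∀ g : Fin n → Fin m → ℝ,
      (∀ i j, 0 ≤ g i j) → (∀ i j, 0 < g i j → E i j) →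
      (∀ i, ∑ j, g i j ≤ c i) → (∀ j, ∑ i, g i j ≤ d j) →
      (∑ i, ∑ j, g i j = ∑ i, ∑ j, f i j) →
      ∑ i, (c i - ∑ j, f i j) ^ 2 ≤ ∑ i, (c i - ∑ j, g i j) ^ 2) :
    (∀ i i' j, 0 < f i j → 0 < f i' j →
      c i - ∑ j', f i j' = c i' - ∑ j', f i' j') ∧
    (∀ i i' j, E i j → E i' j →
      c i' - ∑ j', f i' j' < c i - ∑ j', f i j' → f i' j = 0) := by
  constructor
  · intro i i' j hfi hfi'
    by_contra hne
    rcases lt_or_gt_of_ne hne with h | h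
    · exact absurd (key_14 n m c d E f hfnn hsupp hagent hgood hbal i' i j
        (hsupp i' j hfi') (hsupp i j hfi) h) (ne_of_gt hfi)
    · exact absurd (key_14 n m c d E f hfnn hsupp hagent hgood hbal i i' j
        (hsupp i j hfi) (hsupp i' j hfi') h) (ne_of_gt hfi')
  · intro i i' j hEi hEi' hlt
    exact key_14 n m c d E f hfnn hsupp hagent hgood hbal i i' j hEi hEi' hlt
end

section
/- With $p, f$ an equilibrium of the reduced special-case market as above, define $\hat{p}_k = p_{\ell k}/w_{\ell k}$ (well-defined by the previous lemma) and $\hat{f}_{ik} = \sum_{j} \sum_{\ell} f_{ij,\ell k}$. Then $(\hat{p}, \hat{f})$ is an equilibrium of the original general market with utilities $u$ and weights $w$: (a) $\sum_i \hat{f}_{ik} = \sum_\ell w_{\ell k} \hat{p}_k$ for each good $k$; (b) $\sum_k \hat{f}_{ik} = \sum_j w_{ij} \hat{p}_j$ for each agent $i$; (c) $\hat{f}_{ik} > 0$ implies $u_{ik}/\hat{p}_k = \max_{k'} u_{ik'}/\hat{p}_{k'}$. -/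
theorem stmt_19 (n m : ℕ)
    (w : Fin n → Fin m → ℝ) (u : Fin n → Fin m → ℝ)
    (hw : ∀ i j, 0 ≤ w i j) (hu : ∀ i k, 0 ≤ u i k)
    (hown : ∀ k, ∃ ℓ, 0 < w ℓ k)
    (p : Fin n → Fin m → ℝ) (f : Fin n × Fin m → Fin n × Fin m → ℝ)
    (hppos : ∀ ℓ k, 0 < w ℓ k → 0 < p ℓ k)
    (hfnn : ∀ a g, 0 ≤ f a g)
    (hsupp : ∀ i j ℓ k, 0 < f (i, j) (ℓ, k) → 0 < w i j ∧ 0 < w ℓ k)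
    (hsold : ∀ ℓ k, 0 < w ℓ k → ∑ a : Fin n × Fin m, f a (ℓ, k) = p ℓ k)
    (hbudget : ∀ i j, 0 < w i j → ∑ g : Fin n × Fin m, f (i, j) g = p i j)
    (hbfb : ∀ i j ℓ k, 0 < f (i, j) (ℓ, k) → ∀ ℓ' k', 0 < w ℓ' k' →
      w ℓ' k' * u i k' / p ℓ' k' ≤ w ℓ k * u i k / p ℓ k)
    (phat : Fin m → ℝ)
    (hphat : ∀ ℓ k, 0 < w ℓ k → phat k = p ℓ k / w ℓ k)
    (fhat : Fin n → Fin m → ℝ)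
    (hfhat : ∀ i k, fhat i k = ∑ j, ∑ ℓ, f (i, j) (ℓ, k)) :
    (∀ k, ∑ i, fhat i k = ∑ ℓ, w ℓ k * phat k) ∧
    (∀ i, ∑ k, fhat i k = ∑ j, w i j * phat j) ∧
    (∀ i k, 0 < fhat i k → ∀ k', u i k' / phat k' ≤ u i k / phat k) := by
  -- flows into goods with zero weight are zero
  have hz2 : ∀ i j ℓ k, ¬ 0 < w ℓ k → f (i, j) (ℓ, k) = 0 := by
    intro i j ℓ k h
    by_contra hne
    exact h (hsupp i j ℓ k (lt_of_le_of_ne (hfnn _ _) (Ne.symm hne))).2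
  have hz1 : ∀ i j ℓ k, ¬ 0 < w i j → f (i, j) (ℓ, k) = 0 := by
    intro i j ℓ k h
    by_contra hne
    exact h (hsupp i j ℓ k (lt_of_le_of_ne (hfnn _ _) (Ne.symm hne))).1
  have hwp : ∀ ℓ k, 0 < w ℓ k → w ℓ k * phat k = p ℓ k := by
    intro ℓ k h
    rw [hphat ℓ k h]
    field_simp
  refine ⟨?_, ?_, ?_⟩
  · intro k
    calc ∑ i, fhat i k = ∑ i, ∑ ℓ, ∑ j, f (i, j) (ℓ, k) := by
          simp only [hfhat]
          exact Finset.sum_congr rfl fun i _ => Finset.sum_comm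
      _ = ∑ ℓ, ∑ i, ∑ j, f (i, j) (ℓ, k) := Finset.sum_comm
      _ = ∑ ℓ, w ℓ k * phat k := by
          refine Finset.sum_congr rfl fun ℓ _ => ?_
          by_cases h : 0 < w ℓ k
          · rw [hwp ℓ k h, ← hsold ℓ k h, Fintype.sum_prod_type]
          · have hw0 : w ℓ k = 0 := le_antisymm (not_lt.mp h) (hw ℓ k)
            simp [hz2 _ _ _ _ h, hw0]
  · intro i
    calc ∑ k, fhat i k = ∑ k, ∑ j, ∑ ℓ, f (i, j) (ℓ, k) := by simp only [hfhat]
      _ = ∑ j, ∑ k, ∑ ℓ, f (i, j) (ℓ, k) := Finset.sum_comm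
      _ = ∑ j, ∑ ℓ, ∑ k, f (i, j) (ℓ, k) :=
          Finset.sum_congr rfl fun j _ => Finset.sum_comm
      _ = ∑ j, w i j * phat j := by
          refine Finset.sum_congr rfl fun j _ => ?_
          by_cases h : 0 < w i j
          · rw [hwp i j h, ← hbudget i j h, Fintype.sum_prod_type]
          · have hw0 : w i j = 0 := le_antisymm (not_lt.mp h) (hw i j)
            simp [hz1 _ _ _ _ h, hw0]
  · intro i k hpos k'
    rw [hfhat] at hpos
    have h1 : ∑ j : Fin m, (0:ℝ) < ∑ j, ∑ ℓ, f (i, j) (ℓ, k) := by simpa using hpos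
    obtain ⟨j, -, hj⟩ := Finset.exists_lt_of_sum_lt h1
    have h2 : ∑ ℓ : Fin n, (0:ℝ) < ∑ ℓ, f (i, j) (ℓ, k) := by simpa using hj
    obtain ⟨ℓ, -, hℓ⟩ := Finset.exists_lt_of_sum_lt h2
    have hwk : 0 < w ℓ k := (hsupp i j ℓ k hℓ).2
    obtain ⟨ℓ', hℓ'⟩ := hown k'
    have := hbfb i j ℓ k hℓ ℓ' k' hℓ'
    rw [hphat ℓ' k' hℓ', hphat ℓ k hwk, div_div_eq_mul_div, div_div_eq_mul_div,
      mul_comm (u i k'), mul_comm (u i k)]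
    exact this
end
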